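/- arXiv:1202.0046 — 2 statements merged into one kernel-verified Lean document; each statement's English description precedes it below -/
import Mathlib

section
/- There exists a closed convex set B ⊆ ℝ² containing the origin such that the function t ↦ log γ₂(eᵗ B) is not concave on ℝ. That is, the (B) conjecture fails without the symmetry assumption. -/
open MeasureTheory Real Set Pointwise

noncomputable def gaussian2 : Measure (ℝ × ℝ) :=
  volume.withDensity fun p => ENNReal.ofReal ((1 / (2 * π)) * Real.exp (-(p.1 ^ 2 + p.2 ^ 2) / 2))

/-! Take for `B` the half-plane `{x₁ ≥ -1}`. The dilates `eᵗB = {x₁ ≥ -eᵗ}` increase strictly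
with `t` and all contain `{x₁ ≥ 0}`, so `t ↦ log γ₂(eᵗB)` is non-constant and bounded below.
A concave function on a whole vector space that is bounded below is constant. -/

theorem ConcaveOn.le_of_bddBelow_range {𝕜 E : Type*} [Field 𝕜] [LinearOrder 𝕜]
    [IsStrictOrderedRing 𝕜] [AddCommGroup E] [Module 𝕜 E] {f : E → 𝕜}
    (hf : ConcaveOn 𝕜 univ f) (hbdd : BddBelow (range f)) (x y : E) : f y ≤ f x := by
  obtain ⟨L, hL⟩ := hbdd
  have hL : ∀ z, L ≤ f z := fun z => hL (mem_range_self z)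
  -- `x` divides the segment from `x + T • (x - y)` to `y` in the ratio `T : 1`.
  have key : ∀ T : 𝕜, 0 < T → L + T * f y ≤ (T + 1) * f x := by
    intro T hT
    have hT1 : T + 1 ≠ 0 := by positivity
    have hcomb : (1 / (T + 1)) • (x + T • (x - y)) + (T / (T + 1)) • y = x := by
      match_scalars <;> field_simp <;> ring
    have hconc : (1 / (T + 1)) • f (x + T • (x - y)) + (T / (T + 1)) • f y ≤
        f ((1 / (T + 1)) • (x + T • (x - y)) + (T / (T + 1)) • y) :=
      hf.2 (mem_univ _) (mem_univ _) (by positivity) (by positivity) (by field_simp; ring)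
    rw [hcomb, smul_eq_mul, smul_eq_mul] at hconc
    have := hL (x + T • (x - y))
    field_simp at hconc
    linarith
  by_contra! hlt
  have hgap : 0 < f y - f x := sub_pos.2 hlt
  have := key ((f x - L) / (f y - f x) + 1) (by
    have := div_nonneg (sub_nonneg.2 (hL x)) hgap.le
    linarith)
  field_simp at this
  nlinarith

lemma integrable_gaussian2_density :
    Integrable fun p : ℝ × ℝ => (1 / (2 * π)) * Real.exp (-(p.1 ^ 2 + p.2 ^ 2) / 2) := by
  have h := ((integrable_exp_neg_mul_sq (b := 1 / 2) (by norm_num)).const_mul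
    (1 / (2 * π))).mul_prod (integrable_exp_neg_mul_sq (b := 1 / 2) (by norm_num))
  rw [← Measure.volume_eq_prod] at h
  refine h.congr (ae_of_all _ fun p => ?_)
  simp only [mul_assoc, ← Real.exp_add]
  ring_nf

instance : IsFiniteMeasure gaussian2 :=
  isFiniteMeasure_withDensity_ofReal integrable_gaussian2_density.2

instance : gaussian2.IsOpenPosMeasure :=
  (withDensity_absolutelyContinuous' (by fun_prop) (ae_of_all _ fun p =>
    ENNReal.ofReal_pos.2 (by positivity) |>.ne')).isOpenPosMeasure

lemma smul_setOf_le_fst {c : ℝ} (hc : 0 < c) (a : ℝ) :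
    c • {p : ℝ × ℝ | a ≤ p.1} = {p | c * a ≤ p.1} := by
  ext p
  rw [mem_smul_set_iff_inv_smul_mem₀ hc.ne', mem_ofPred_eq, mem_ofPred_eq, Prod.smul_fst,
    smul_eq_mul, le_inv_mul_iff₀ hc]

section HalfPlane

variable (μ : Measure (ℝ × ℝ)) [IsFiniteMeasure μ] [μ.IsOpenPosMeasure]

lemma strictAnti_measure_setOf_le_fst :
    StrictAnti fun a : ℝ => (μ {p : ℝ × ℝ | a ≤ p.1}).toReal := by
  intro a b hab
  have hsub : {p : ℝ × ℝ | b ≤ p.1} ⊆ {p | a ≤ p.1} := fun p (hp : b ≤ p.1) => hab.le.trans hp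
  have hstrip : 0 < μ ({p : ℝ × ℝ | a ≤ p.1} \ {p | b ≤ p.1}) := by
    refine lt_of_lt_of_le ?_ (measure_mono (s := {p : ℝ × ℝ | a < p.1 ∧ p.1 < b}) ?_)
    · refine ((isOpen_lt continuous_const continuous_fst).inter
        (isOpen_lt continuous_fst continuous_const)).measure_pos _ ⟨((a + b) / 2, 0), ?_⟩
      exact show a < (a + b) / 2 ∧ (a + b) / 2 < b from ⟨by linarith, by linarith⟩
    · rintro p ⟨hap, hpb⟩
      exact ⟨hap.le, not_le.2 hpb⟩
  have hsplit : μ {p | b ≤ p.1} + μ ({p | a ≤ p.1} \ {p | b ≤ p.1}) = μ {p | a ≤ p.1} := by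
    rw [measure_add_sdiff (measurableSet_le measurable_const measurable_fst).nullMeasurableSet,
      union_eq_self_of_subset_left hsub]
  show (μ _).toReal < (μ _).toReal
  refine (ENNReal.toReal_lt_toReal (measure_ne_top _ _) (measure_ne_top _ _)).2 ?_
  rw [← hsplit]
  exact ENNReal.lt_add_right (measure_ne_top _ _) hstrip.ne'

lemma measure_setOf_le_fst_pos (a : ℝ) : 0 < (μ {p : ℝ × ℝ | a ≤ p.1}).toReal :=
  ENNReal.toReal_nonneg.trans_lt (strictAnti_measure_setOf_le_fst μ (lt_add_one a))

end HalfPlane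

theorem stmt_12 :
    ∃ B : Set (ℝ × ℝ), IsClosed B ∧ Convex ℝ B ∧ (0 : ℝ × ℝ) ∈ B ∧
      ¬ ConcaveOn ℝ Set.univ (fun t : ℝ => Real.log (gaussian2 (Real.exp t • B)).toReal) := by
  refine ⟨{p | -1 ≤ p.1}, isClosed_le continuous_const continuous_fst,
    convex_halfSpace_ge (LinearMap.fst ℝ ℝ ℝ).isLinear _, show (-1 : ℝ) ≤ 0 by norm_num,
    fun hconc => ?_⟩
  simp only [smul_setOf_le_fst (exp_pos _), mul_neg_one] at hconc
  set φ : ℝ → ℝ := fun a => (gaussian2 {p : ℝ × ℝ | a ≤ p.1}).toReal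
  have hbdd : BddBelow (range fun t => log (φ (-exp t))) :=
    ⟨log (φ 0), forall_mem_range.2 fun t => log_le_log (measure_setOf_le_fst_pos _ 0)
      ((strictAnti_measure_setOf_le_fst _).antitone (neg_nonpos.2 (exp_pos t).le))⟩
  have hlt : log (φ (-exp 0)) < log (φ (-exp 1)) :=
    log_lt_log (measure_setOf_le_fst_pos _ _)
      (strictAnti_measure_setOf_le_fst _ (neg_lt_neg (exp_lt_exp.2 one_pos)))
  exact hlt.not_ge (hconc.le_of_bddBelow_range hbdd 0 1)
end

section
/- Let H_ε = {(x,y) ∈ ℝ² : y ≥ −ε} be a halfspace with ε > 0. Then for sufficiently small ε > 0, the function t ↦ log γ₂(eᵗ H_ε) is not concave on ℝ. Hence the (B) property fails for halfspaces containing but not symmetric about the origin. -/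
open MeasureTheory Real Set Pointwise

/-!
Since `γ₂ = N(0,1) ⊗ N(0,1)`, the dilate `eᵗ H_ε` has mass `N(0,1)[-εeᵗ, ∞)`, which is strictly
increasing in `t` and bounded below by `N(0,1)[0, ∞) > 0`. So `t ↦ log γ₂(eᵗ H_ε)` is strictly
increasing and bounded below, whereas a concave function on `ℝ` with a positive secant slope tends
to `-∞` at `-∞`.
-/

open ProbabilityTheory

theorem ConcaveOn.antitone_of_bddBelow {f : ℝ → ℝ} (hf : ConcaveOn ℝ univ f)
    (hbdd : BddBelow (range f)) : Antitone f := by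
  obtain ⟨B, hB⟩ := hbdd
  intro a b hab
  by_contra! hlt
  have hab : a < b := hab.lt_of_ne (by rintro rfl; exact hlt.false)
  set s := (f b - f a) / (b - a)
  have hs : 0 < s := div_pos (sub_pos.2 hlt) (sub_pos.2 hab)
  have hBa : B ≤ f a := hB ⟨a, rfl⟩
  -- far enough to the left, the secant line through `a` and `b` drops below `B`
  set t := a - (f a - B) / s - 1
  have hta : t < a := by have := div_nonneg (sub_nonneg.2 hBa) hs.le; linarith
  have hslope : s ≤ (f a - f t) / (a - t) :=
    hf.slope_anti_adjacent (mem_univ _) (mem_univ _) hta hab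
  rw [le_div_iff₀ (sub_pos.2 hta)] at hslope
  have : s * (a - t) = f a - B + s := by simp only [t]; field_simp; ring
  linarith [hB ⟨t, rfl⟩]

theorem gaussian2_eq_prod : gaussian2 = (gaussianReal 0 1).prod (gaussianReal 0 1) := by
  rw [gaussianReal_of_var_ne_zero _ one_ne_zero,
    prod_withDensity (measurable_gaussianPDF _ _) (measurable_gaussianPDF _ _),
    ← Measure.volume_eq_prod, gaussian2]
  congr 1
  ext p
  rw [gaussianPDF, gaussianPDF, ← ENNReal.ofReal_mul (gaussianPDFReal_nonneg _ _ _)]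
  congr 1
  have h2π : √(2 * π) * √(2 * π) = 2 * π := mul_self_sqrt (by positivity)
  simp only [gaussianPDFReal, NNReal.coe_one, mul_one, sub_zero]
  rw [mul_mul_mul_comm, ← exp_add, ← mul_inv, h2π]
  ring_nf

theorem gaussian2_setOf_snd_ge (a : ℝ) :
    gaussian2 {p | p.2 ≥ a} = gaussianReal 0 1 (Ici a) := by
  have : {p : ℝ × ℝ | p.2 ≥ a} = univ ×ˢ Ici a := by ext; simp
  rw [this, gaussian2_eq_prod, Measure.prod_prod, measure_univ, one_mul]

theorem smul_setOf_snd_ge {c : ℝ} (hc : 0 < c) (a : ℝ) :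
    c • {p : ℝ × ℝ | p.2 ≥ a} = {p | p.2 ≥ c * a} := by
  ext p
  rw [mem_smul_set_iff_inv_smul_mem₀ hc.ne']
  simp only [mem_ofPred_eq, Prod.smul_snd, smul_eq_mul, ge_iff_le]
  exact le_inv_mul_iff₀ hc

section AbsolutelyContinuous

variable {μ : Measure ℝ}

theorem measure_Ici_pos_of_absolutelyContinuous (hμ : volume ≪ μ) (a : ℝ) : 0 < μ (Ici a) :=
  pos_iff_ne_zero.2 fun h => by simpa using hμ h

theorem strictAnti_measure_Ici_of_absolutelyContinuous [IsFiniteMeasure μ] (hμ : volume ≪ μ) :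
    StrictAnti fun a => μ (Ici a) := by
  intro a b hab
  have hIco : 0 < μ (Ico a b) := pos_iff_ne_zero.2 fun h => by simpa [hab.not_ge] using hμ h
  show μ (Ici b) < μ (Ici a)
  rw [← Ico_union_Ici_eq_Ici hab.le, measure_union
    (disjoint_left.2 fun _ hx hx' => hx.2.not_ge hx') measurableSet_Ici, add_comm]
  exact ENNReal.lt_add_right (measure_ne_top _ _) hIco.ne'

theorem strictMono_log_measure_Ici_neg [IsFiniteMeasure μ] (hμ : volume ≪ μ) :
    StrictMono fun c => log (μ (Ici (-c))).toReal := by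
  intro c d hcd
  have hpos := ENNReal.toReal_pos (measure_Ici_pos_of_absolutelyContinuous hμ (-c)).ne'
    (measure_ne_top _ _)
  refine log_lt_log hpos ((ENNReal.toReal_lt_toReal (measure_ne_top _ _) (measure_ne_top _ _)).2 ?_)
  exact strictAnti_measure_Ici_of_absolutelyContinuous hμ (neg_lt_neg hcd)

end AbsolutelyContinuous

theorem stmt_13 :
    ∃ ε₀ > (0 : ℝ), ∀ ε ∈ Set.Ioo (0 : ℝ) ε₀,
      ¬ ConcaveOn ℝ Set.univ (fun t : ℝ =>
        Real.log (gaussian2 (Real.exp t • {p : ℝ × ℝ | p.2 ≥ -ε})).toReal) := by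
  refine ⟨1, one_pos, fun ε hε hconc => ?_⟩
  set φ : ℝ → ℝ := fun c => log (gaussianReal 0 1 (Ici (-c))).toReal
  have hφ : StrictMono φ :=
    strictMono_log_measure_Ici_neg (gaussianReal_absolutelyContinuous' 0 one_ne_zero)
  have hf : (fun t : ℝ => log (gaussian2 (exp t • {p : ℝ × ℝ | p.2 ≥ -ε})).toReal) =
      fun t => φ (exp t * ε) := by
    ext t
    rw [smul_setOf_snd_ge (exp_pos t), mul_neg, gaussian2_setOf_snd_ge]
  rw [hf] at hconc
  have hmono : StrictMono fun t => φ (exp t * ε) :=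
    hφ.comp fun s t hst => mul_lt_mul_of_pos_right (exp_lt_exp.2 hst) hε.1
  have hbdd : BddBelow (range fun t => φ (exp t * ε)) :=
    ⟨φ 0, by rintro _ ⟨t, rfl⟩; exact hφ.monotone (by positivity [hε.1])⟩
  exact (hmono zero_lt_one).not_ge (hconc.antitone_of_bddBelow hbdd zero_le_one)
end
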